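/- arXiv:2212.01079 — 4 statements merged into one kernel-verified Lean document; each statement's English description precedes it below -/
import Mathlib

section
/- Let -α < k₁ ≤ k₂ and let y : (0,∞) → ℝ^d be a function such that t ↦ t^{-1/α} y(t) is bounded. Then there exists C > 0 such that for all t > 0 and x ∈ ℝ^d, ρ^{k₂}(t, x + y(t)) ≤ C · ρ^{k₁}(t, x). -/
open MeasureTheory Real Set

/-- `ρ^k(t,x) = t^{-d/α} (1 + t^{-1/α}|x|)^{-d-α-k}`. -/
noncomputable def rho (d : ℕ) (α k t : ℝ) (x : EuclideanSpace ℝ (Fin d)) : ℝ :=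
  t ^ (-(d : ℝ) / α) * (1 + t ^ (-1 / α) * ‖x‖) ^ (-(d : ℝ) - α - k)

/-- If `-α < k₁ ≤ k₂` and `t ↦ t^{-1/α} y(t)` is bounded, then
`ρ^{k₂}(t, x + y(t)) ≤ C ρ^{k₁}(t, x)` for some `C > 0`. -/
theorem rho_shift_control (d : ℕ) (hd : 1 ≤ d) (α : ℝ) (hα1 : 1 < α) (hα2 : α < 2)
    (k₁ k₂ : ℝ) (hk1 : -α < k₁) (hk12 : k₁ ≤ k₂)
    (y : ℝ → EuclideanSpace ℝ (Fin d))
    (hy : ∃ M : ℝ, ∀ t : ℝ, 0 < t → t ^ (-1 / α) * ‖y t‖ ≤ M) :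
    ∃ C : ℝ, 0 < C ∧ ∀ t : ℝ, 0 < t → ∀ x : EuclideanSpace ℝ (Fin d),
      rho d α k₂ t (x + y t) ≤ C * rho d α k₁ t x := by
  obtain ⟨M, hM⟩ := hy
  have hM0 : 0 ≤ M :=
    le_trans (mul_nonneg (Real.rpow_nonneg zero_le_one _) (norm_nonneg _)) (hM 1 one_pos)
  have hd1 : (1:ℝ) ≤ d := by exact_mod_cast hd
  set p : ℝ := (d:ℝ) + α + k₂ with hp
  have hp0 : 0 < p := by simp only [hp]; linarith
  have hM1 : (0:ℝ) < 1 + M := by linarith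
  refine ⟨(1 + M) ^ p, Real.rpow_pos_of_pos hM1 _, ?_⟩
  intro t ht x
  unfold rho
  set a := t ^ (-1/α) with ha
  have ha0 : 0 < a := Real.rpow_pos_of_pos ht _
  have hay : a * ‖y t‖ ≤ M := hM t ht
  set A := 1 + a * ‖x‖ with hA
  set B := 1 + a * ‖x + y t‖ with hB
  have hA1 : 1 ≤ A := le_add_of_nonneg_right (by positivity)
  have hB1 : 1 ≤ B := le_add_of_nonneg_right (by positivity)
  have hAp : 0 < A ^ p := Real.rpow_pos_of_pos (by linarith) _
  have hBp : 0 < B ^ p := Real.rpow_pos_of_pos (by linarith) _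
  have h1 : ‖x‖ ≤ ‖x + y t‖ + ‖y t‖ := by
    have := norm_add_le (x + y t) (-(y t))
    simpa using this
  have hAB : A ≤ (1 + M) * B := by
    have h2 : a * ‖x‖ ≤ a * ‖x + y t‖ + a * ‖y t‖ := by
      have := mul_le_mul_of_nonneg_left h1 ha0.le
      linarith [this, mul_add a ‖x + y t‖ ‖y t‖]
    nlinarith [mul_nonneg ha0.le (norm_nonneg (x + y t))]
  have hApBp : A ^ p ≤ (1 + M) ^ p * B ^ p := by
    have := Real.rpow_le_rpow (by linarith) hAB hp0.le
    rwa [Real.mul_rpow hM1.le (by linarith)] at this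
  have key : B ^ (-(d:ℝ) - α - k₂) ≤ (1 + M) ^ p * A ^ (-(d:ℝ) - α - k₁) := by
    have e2 : -(d:ℝ) - α - k₂ = -p := by simp only [hp]; ring
    have step1 : B ^ (-p) ≤ (1 + M) ^ p * A ^ (-p) := by
      rw [Real.rpow_neg (by linarith), Real.rpow_neg (by linarith)]
      calc (B ^ p)⁻¹ = 1 / B ^ p := (one_div _).symm
        _ ≤ (1 + M) ^ p / A ^ p := by
            rw [div_le_div_iff₀ hBp hAp]; linarith
        _ = (1 + M) ^ p * (A ^ p)⁻¹ := by rw [div_eq_mul_inv]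
    have step2 : A ^ (-p) ≤ A ^ (-(d:ℝ) - α - k₁) := by
      apply Real.rpow_le_rpow_of_exponent_le hA1
      simp only [hp]; linarith
    calc B ^ (-(d:ℝ) - α - k₂) = B ^ (-p) := by rw [e2]
      _ ≤ (1 + M) ^ p * A ^ (-p) := step1
      _ ≤ (1 + M) ^ p * A ^ (-(d:ℝ) - α - k₁) := by
          exact mul_le_mul_of_nonneg_left step2 (Real.rpow_nonneg hM1.le _)
  have htq : 0 ≤ t ^ (-(d:ℝ)/α) := (Real.rpow_pos_of_pos ht _).le
  calc t ^ (-(d:ℝ)/α) * B ^ (-(d:ℝ) - α - k₂)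
      ≤ t ^ (-(d:ℝ)/α) * ((1 + M) ^ p * A ^ (-(d:ℝ) - α - k₁)) :=
        mul_le_mul_of_nonneg_left key htq
    _ = (1 + M) ^ p * (t ^ (-(d:ℝ)/α) * A ^ (-(d:ℝ) - α - k₁)) := by ring
end

section
/- For all k₁, k₂ > -α, there exists C > 0 such that for all 0 ≤ s < t and y ∈ ℝ^d, the spatial convolution satisfies ∫_{ℝ^d} ρ^{k₁}(t-s, y-z) ρ^{k₂}(s, z) dz ≤ C · ρ^{min(k₁,k₂)}(t, y). -/
open MeasureTheory Real Set

namespace RhoConv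

lemma rpow_neg_anti {a b p : ℝ} (ha : 0 < a) (hab : a ≤ b) (hp : 0 ≤ p) :
    b ^ (-p) ≤ a ^ (-p) := by
  rw [Real.rpow_neg (ha.trans_le hab).le, Real.rpow_neg ha.le]
  exact inv_anti₀ (Real.rpow_pos_of_pos ha p) (Real.rpow_le_rpow ha.le hab hp)

lemma rpow_div_two_neg {a p : ℝ} (ha : 0 ≤ a) :
    (a / 2) ^ (-p) = 2 ^ p * a ^ (-p) := by
  rw [div_eq_mul_inv, Real.mul_rpow ha (by norm_num),
    Real.inv_rpow (by norm_num : (0:ℝ) ≤ 2), Real.rpow_neg (by norm_num : (0:ℝ) ≤ 2), inv_inv,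
    mul_comm]

lemma rho_eq (d : ℕ) (α k t : ℝ) (x : EuclideanSpace ℝ (Fin d)) :
    rho d α k t x = t ^ (-((d : ℝ) / α)) * (1 + t ^ (-(1 / α)) * ‖x‖) ^ (-((d : ℝ) + α + k)) := by
  have e1 : -(d : ℝ) / α = -((d : ℝ) / α) := neg_div _ _
  have e2 : (-1 : ℝ) / α = -(1 / α) := neg_div _ _
  have e3 : -(d : ℝ) - α - k = -((d : ℝ) + α + k) := by ring
  rw [rho, e1, e2, e3]

lemma rho_nonneg {d : ℕ} {α k t : ℝ} (ht : 0 ≤ t) (x : EuclideanSpace ℝ (Fin d)) :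
    0 ≤ rho d α k t x := by
  rw [rho]; positivity

lemma rho_pos {d : ℕ} {α k t : ℝ} (ht : 0 < t) (x : EuclideanSpace ℝ (Fin d)) :
    0 < rho d α k t x := by
  rw [rho]; positivity

lemma rho_le_sup {d : ℕ} {α k τ : ℝ} (hp : 0 ≤ (d:ℝ) + α + k) (hτ : 0 < τ)
    (x : EuclideanSpace ℝ (Fin d)) : rho d α k τ x ≤ τ ^ (-((d:ℝ)/α)) := by
  rw [rho_eq]
  have hb : 1 ≤ 1 + τ ^ (-(1/α)) * ‖x‖ := by
    have : 0 ≤ τ ^ (-(1/α)) * ‖x‖ := by positivity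
    linarith
  have h1 := Real.rpow_le_one_of_one_le_of_nonpos hb (by linarith : -((d:ℝ)+α+k) ≤ 0)
  calc τ ^ (-((d:ℝ)/α)) * (1 + τ ^ (-(1/α)) * ‖x‖) ^ (-((d:ℝ)+α+k))
      ≤ τ ^ (-((d:ℝ)/α)) * 1 := by
        exact mul_le_mul_of_nonneg_left h1 (Real.rpow_nonneg hτ.le _)
    _ = τ ^ (-((d:ℝ)/α)) := mul_one _

lemma half_bound {t τ p : ℝ} (ht : 0 < t) (hτ : t ≤ 2 * τ) (hp : 0 ≤ p) :
    τ ^ (-p) ≤ 2 ^ p * t ^ (-p) := by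
  have h2 : 0 < t / 2 := by linarith
  have h3 : t / 2 ≤ τ := by linarith
  calc τ ^ (-p) ≤ (t/2) ^ (-p) := rpow_neg_anti h2 h3 hp
    _ = 2 ^ p * t ^ (-p) := rpow_div_two_neg ht.le

lemma small_y {d : ℕ} {α m t : ℝ} (hpm : 0 ≤ (d:ℝ)+α+m) (ht : 0 < t)
    {y : EuclideanSpace ℝ (Fin d)} (hy : t ^ (-(1/α)) * ‖y‖ ≤ 1) :
    t ^ (-((d:ℝ)/α)) ≤ 2 ^ ((d:ℝ)+α+m) * rho d α m t y := by
  rw [rho_eq]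
  have hX : 0 ≤ t ^ (-(1/α)) * ‖y‖ := by positivity
  have h2 : (2:ℝ) ^ (-((d:ℝ)+α+m)) ≤ (1 + t ^ (-(1/α)) * ‖y‖) ^ (-((d:ℝ)+α+m)) :=
    rpow_neg_anti (by linarith) (by linarith) hpm
  have e : (2:ℝ) ^ ((d:ℝ)+α+m) * 2 ^ (-((d:ℝ)+α+m)) = 1 := by
    rw [← Real.rpow_add (by norm_num : (0:ℝ) < 2), show ((d:ℝ)+α+m) + -((d:ℝ)+α+m) = 0 by ring, Real.rpow_zero]
  have ht0 : 0 ≤ t ^ (-((d:ℝ)/α)) := Real.rpow_nonneg ht.le _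
  have h2pos : (0:ℝ) < 2 ^ ((d:ℝ)+α+m) := Real.rpow_pos_of_pos (by norm_num) _
  nlinarith [mul_le_mul_of_nonneg_left (mul_le_mul_of_nonneg_left h2 ht0) h2pos.le]

lemma two_rpow_pos (p : ℝ) : (0:ℝ) < 2 ^ p := Real.rpow_pos_of_pos (by norm_num) _

lemma two_rpow_mul (p q : ℝ) : (2:ℝ) ^ p * 2 ^ q = 2 ^ (p + q) :=
  (Real.rpow_add (by norm_num) _ _).symm

set_option maxHeartbeats 2000000 in
lemma pointwise (d : ℕ) (hd : 1 ≤ d) {α k₁ k₂ : ℝ} (hα1 : 1 < α)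
    (hk1 : -α < k₁) (hk2 : -α < k₂) {s t : ℝ} (hs : 0 < s) (hst : 2 * s ≤ t)
    (y z : EuclideanSpace ℝ (Fin d)) :
    rho d α k₁ (t - s) (y - z) * rho d α k₂ s z ≤
      rho d α (min k₁ k₂) t y *
        (2 ^ ((d:ℝ)/α + ((d:ℝ) + α + k₁) + ((d:ℝ) + α + min k₁ k₂)) * rho d α k₂ s z +
         2 ^ (((d:ℝ) + α + k₂) + ((d:ℝ) + α + min k₁ k₂)) * rho d α k₁ (t - s) (y - z)) := by
  set m := min k₁ k₂ with hm
  set Ca : ℝ := 2 ^ ((d:ℝ)/α + ((d:ℝ) + α + k₁) + ((d:ℝ) + α + m)) with hCa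
  set Cb : ℝ := 2 ^ (((d:ℝ) + α + k₂) + ((d:ℝ) + α + m)) with hCb
  have hα0 : (0:ℝ) < α := by linarith
  have hd1 : (1:ℝ) ≤ d := by exact_mod_cast hd
  have ht : 0 < t := by linarith
  have hts : 0 < t - s := by linarith
  have hm1 : m ≤ k₁ := min_le_left _ _
  have hm2 : m ≤ k₂ := min_le_right _ _
  have hmα : -α < m := lt_min hk1 hk2
  have hpm : 0 < (d:ℝ) + α + m := by linarith
  have hp1 : 0 < (d:ℝ) + α + k₁ := by linarith
  have hp2 : 0 < (d:ℝ) + α + k₂ := by linarith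
  have hr2 : 0 ≤ rho d α k₂ s z := rho_nonneg hs.le z
  have hr1 : 0 ≤ rho d α k₁ (t-s) (y-z) := rho_nonneg hts.le _
  have hrm : 0 ≤ rho d α m t y := rho_nonneg ht.le y
  have hCa0 : 0 < Ca := two_rpow_pos _
  have hCb0 : 0 < Cb := two_rpow_pos _
  have hX0 : 0 ≤ t ^ (-(1/α)) * ‖y‖ := by positivity
  have hcases : rho d α k₁ (t-s) (y-z) ≤ Ca * rho d α m t y ∨
      rho d α k₂ s z ≤ Cb * rho d α m t y := by
    rcases le_or_gt (t ^ (-(1/α)) * ‖y‖) 1 with hX1 | hX1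
    · left
      have h1 : rho d α k₁ (t-s) (y-z) ≤ (t-s) ^ (-((d:ℝ)/α)) := rho_le_sup hp1.le hts _
      have h2 : (t-s) ^ (-((d:ℝ)/α)) ≤ 2 ^ ((d:ℝ)/α) * t ^ (-((d:ℝ)/α)) :=
        half_bound ht (by linarith) (by positivity)
      have h3 : t ^ (-((d:ℝ)/α)) ≤ 2 ^ ((d:ℝ)+α+m) * rho d α m t y := small_y hpm.le ht hX1
      have h4 : (2:ℝ) ^ ((d:ℝ)/α) * 2 ^ ((d:ℝ)+α+m) ≤ Ca := by
        rw [two_rpow_mul, hCa]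
        exact Real.rpow_le_rpow_of_exponent_le one_le_two (by linarith)
      calc rho d α k₁ (t-s) (y-z) ≤ (t-s) ^ (-((d:ℝ)/α)) := h1
        _ ≤ 2 ^ ((d:ℝ)/α) * t ^ (-((d:ℝ)/α)) := h2
        _ ≤ 2 ^ ((d:ℝ)/α) * (2 ^ ((d:ℝ)+α+m) * rho d α m t y) :=
            mul_le_mul_of_nonneg_left h3 (two_rpow_pos _).le
        _ = (2 ^ ((d:ℝ)/α) * 2 ^ ((d:ℝ)+α+m)) * rho d α m t y := by ring
        _ ≤ Ca * rho d α m t y := mul_le_mul_of_nonneg_right h4 hrm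
    · rcases le_or_gt ‖y‖ (2 * ‖y - z‖) with hyz | hyz
      · left
        have hyz2 : ‖y‖ / 2 ≤ ‖y - z‖ := by linarith
        have e1 : t ^ (-(1/α)) ≤ (t-s) ^ (-(1/α)) :=
          rpow_neg_anti hts (by linarith) (by positivity)
        have hB : (1 + t ^ (-(1/α)) * ‖y‖)/2 ≤ 1 + (t-s) ^ (-(1/α)) * ‖y - z‖ := by
          have e2 : t ^ (-(1/α)) * (‖y‖/2) ≤ (t-s) ^ (-(1/α)) * ‖y - z‖ :=
            mul_le_mul e1 hyz2 (by positivity) (by positivity)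
          nlinarith [hX0]
        have hfac : (1 + (t-s) ^ (-(1/α)) * ‖y-z‖) ^ (-((d:ℝ)+α+k₁))
            ≤ 2 ^ ((d:ℝ)+α+k₁) * (1 + t ^ (-(1/α)) * ‖y‖) ^ (-((d:ℝ)+α+m)) := by
          have hmono : (1 + t ^ (-(1/α)) * ‖y‖) ^ (-((d:ℝ)+α+k₁))
              ≤ (1 + t ^ (-(1/α)) * ‖y‖) ^ (-((d:ℝ)+α+m)) :=
            Real.rpow_le_rpow_of_exponent_le (by linarith) (by linarith)
          calc (1 + (t-s) ^ (-(1/α)) * ‖y-z‖) ^ (-((d:ℝ)+α+k₁))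
              ≤ ((1 + t ^ (-(1/α)) * ‖y‖)/2) ^ (-((d:ℝ)+α+k₁)) :=
                rpow_neg_anti (by linarith) hB hp1.le
            _ = 2 ^ ((d:ℝ)+α+k₁) * (1 + t ^ (-(1/α)) * ‖y‖) ^ (-((d:ℝ)+α+k₁)) :=
                rpow_div_two_neg (by linarith)
            _ ≤ 2 ^ ((d:ℝ)+α+k₁) * (1 + t ^ (-(1/α)) * ‖y‖) ^ (-((d:ℝ)+α+m)) :=
                mul_le_mul_of_nonneg_left hmono (two_rpow_pos _).le
        have h4 : (2:ℝ) ^ ((d:ℝ)/α) * 2 ^ ((d:ℝ)+α+k₁) ≤ Ca := by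
          rw [two_rpow_mul, hCa]
          exact Real.rpow_le_rpow_of_exponent_le one_le_two (by linarith)
        calc rho d α k₁ (t-s) (y-z)
            = (t-s) ^ (-((d:ℝ)/α)) * (1 + (t-s) ^ (-(1/α)) * ‖y-z‖) ^ (-((d:ℝ)+α+k₁)) :=
              rho_eq d α k₁ (t-s) (y-z)
          _ ≤ (2 ^ ((d:ℝ)/α) * t ^ (-((d:ℝ)/α))) *
                (2 ^ ((d:ℝ)+α+k₁) * (1 + t ^ (-(1/α)) * ‖y‖) ^ (-((d:ℝ)+α+m))) := by
              apply mul_le_mul (half_bound ht (by linarith) (by positivity)) hfac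
                (by positivity) (by positivity)
          _ = (2 ^ ((d:ℝ)/α) * 2 ^ ((d:ℝ)+α+k₁)) *
                (t ^ (-((d:ℝ)/α)) * (1 + t ^ (-(1/α)) * ‖y‖) ^ (-((d:ℝ)+α+m))) := by ring
          _ = (2 ^ ((d:ℝ)/α) * 2 ^ ((d:ℝ)+α+k₁)) * rho d α m t y := by
              rw [rho_eq d α m t y]
          _ ≤ Ca * rho d α m t y := mul_le_mul_of_nonneg_right h4 hrm
      · right
        have hy0 : 0 < ‖y‖ := by
          rcases lt_or_ge 0 ‖y‖ with h | h
          · exact h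
          · have hy' : ‖y‖ = 0 := le_antisymm h (norm_nonneg y)
            rw [hy', mul_zero] at hX1; linarith
        have hz2 : ‖y‖ / 2 ≤ ‖z‖ := by
          have h5 : ‖y‖ - ‖y - z‖ ≤ ‖y - (y - z)‖ := norm_sub_norm_le y (y - z)
          rw [sub_sub_cancel] at h5
          linarith
        have hty : t ^ ((1:ℝ)/α) ≤ ‖y‖ := by
          have e : t ^ ((1:ℝ)/α) * t ^ (-(1/α)) = 1 := by
            rw [← Real.rpow_add ht, show (1:ℝ)/α + -(1/α) = 0 by ring, Real.rpow_zero]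
          have htp : 0 < t ^ ((1:ℝ)/α) := Real.rpow_pos_of_pos ht _
          nlinarith
        have hc0 : 0 < s ^ (-(1/α)) := Real.rpow_pos_of_pos hs _
        have A1 : rho d α k₂ s z ≤
            2 ^ ((d:ℝ)+α+k₂) * (t ^ ((α+k₂)/α) * ‖y‖ ^ (-((d:ℝ)+α+k₂))) := by
          have step1 : (1 + s ^ (-(1/α)) * ‖z‖) ^ (-((d:ℝ)+α+k₂))
              ≤ (s ^ (-(1/α)) * (‖y‖/2)) ^ (-((d:ℝ)+α+k₂)) := by
            apply rpow_neg_anti (by positivity) _ hp2.le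
            have h6 : s ^ (-(1/α)) * (‖y‖/2) ≤ s ^ (-(1/α)) * ‖z‖ :=
              mul_le_mul_of_nonneg_left hz2 hc0.le
            nlinarith [mul_nonneg hc0.le (norm_nonneg z)]
          have step2 : (s ^ (-(1/α)) * (‖y‖/2)) ^ (-((d:ℝ)+α+k₂))
              = s ^ (((d:ℝ)+α+k₂)/α) * (2 ^ ((d:ℝ)+α+k₂) * ‖y‖ ^ (-((d:ℝ)+α+k₂))) := by
            rw [Real.mul_rpow hc0.le (by positivity), ← Real.rpow_mul hs.le,
              show -(1/α) * -((d:ℝ)+α+k₂) = ((d:ℝ)+α+k₂)/α by ring,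
              rpow_div_two_neg (norm_nonneg y)]
          have step3 : s ^ (-((d:ℝ)/α)) * s ^ (((d:ℝ)+α+k₂)/α) = s ^ ((α+k₂)/α) := by
            rw [← Real.rpow_add hs, show -((d:ℝ)/α) + ((d:ℝ)+α+k₂)/α = (α+k₂)/α by ring]
          have step4 : s ^ ((α+k₂)/α) ≤ t ^ ((α+k₂)/α) :=
            Real.rpow_le_rpow hs.le (by linarith) (div_nonneg (by linarith) (by linarith))
          calc rho d α k₂ s z
              = s ^ (-((d:ℝ)/α)) * (1 + s ^ (-(1/α)) * ‖z‖) ^ (-((d:ℝ)+α+k₂)) :=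
                rho_eq d α k₂ s z
            _ ≤ s ^ (-((d:ℝ)/α)) * (s ^ (-(1/α)) * (‖y‖/2)) ^ (-((d:ℝ)+α+k₂)) :=
                mul_le_mul_of_nonneg_left step1 (Real.rpow_nonneg hs.le _)
            _ = (s ^ (-((d:ℝ)/α)) * s ^ (((d:ℝ)+α+k₂)/α)) *
                  (2 ^ ((d:ℝ)+α+k₂) * ‖y‖ ^ (-((d:ℝ)+α+k₂))) := by rw [step2]; ring
            _ = s ^ ((α+k₂)/α) * (2 ^ ((d:ℝ)+α+k₂) * ‖y‖ ^ (-((d:ℝ)+α+k₂))) := by rw [step3]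
            _ ≤ t ^ ((α+k₂)/α) * (2 ^ ((d:ℝ)+α+k₂) * ‖y‖ ^ (-((d:ℝ)+α+k₂))) :=
                mul_le_mul_of_nonneg_right step4 (by positivity)
            _ = 2 ^ ((d:ℝ)+α+k₂) * (t ^ ((α+k₂)/α) * ‖y‖ ^ (-((d:ℝ)+α+k₂))) := by ring
        have A2 : t ^ ((α+k₂)/α) * ‖y‖ ^ (-((d:ℝ)+α+k₂))
            ≤ t ^ ((α+m)/α) * ‖y‖ ^ (-((d:ℝ)+α+m)) := by
          have sp1 : ‖y‖ ^ (-((d:ℝ)+α+k₂)) = ‖y‖ ^ (-((d:ℝ)+α+m)) * ‖y‖ ^ (-(k₂ - m)) := by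
            rw [← Real.rpow_add hy0, show -((d:ℝ)+α+m) + -(k₂-m) = -((d:ℝ)+α+k₂) by ring]
          have sp2 : ‖y‖ ^ (-(k₂ - m)) ≤ (t ^ ((1:ℝ)/α)) ^ (-(k₂ - m)) :=
            rpow_neg_anti (Real.rpow_pos_of_pos ht _) hty (by linarith)
          have sp3 : (t ^ ((1:ℝ)/α)) ^ (-(k₂ - m)) = t ^ (-((k₂-m)/α)) := by
            rw [← Real.rpow_mul ht.le, show (1:ℝ)/α * -(k₂-m) = -((k₂-m)/α) by ring]
          have sp4 : t ^ ((α+k₂)/α) * t ^ (-((k₂-m)/α)) = t ^ ((α+m)/α) := by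
            rw [← Real.rpow_add ht, show (α+k₂)/α + -((k₂-m)/α) = (α+m)/α by ring]
          calc t ^ ((α+k₂)/α) * ‖y‖ ^ (-((d:ℝ)+α+k₂))
              = (t ^ ((α+k₂)/α) * ‖y‖ ^ (-(k₂-m))) * ‖y‖ ^ (-((d:ℝ)+α+m)) := by
                rw [sp1]; ring
            _ ≤ (t ^ ((α+k₂)/α) * t ^ (-((k₂-m)/α))) * ‖y‖ ^ (-((d:ℝ)+α+m)) := by
                apply mul_le_mul_of_nonneg_right _ (Real.rpow_nonneg (norm_nonneg y) _)
                rw [← sp3]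
                exact mul_le_mul_of_nonneg_left sp2 (Real.rpow_nonneg ht.le _)
            _ = t ^ ((α+m)/α) * ‖y‖ ^ (-((d:ℝ)+α+m)) := by rw [sp4]
        have A3 : t ^ ((α+m)/α) * ‖y‖ ^ (-((d:ℝ)+α+m)) ≤ 2 ^ ((d:ℝ)+α+m) * rho d α m t y := by
          have q1 : (2 * (t ^ (-(1/α)) * ‖y‖)) ^ (-((d:ℝ)+α+m))
              ≤ (1 + t ^ (-(1/α)) * ‖y‖) ^ (-((d:ℝ)+α+m)) :=
            rpow_neg_anti (by linarith) (by linarith) hpm.le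
          have q2 : (2 * (t ^ (-(1/α)) * ‖y‖)) ^ (-((d:ℝ)+α+m))
              = 2 ^ (-((d:ℝ)+α+m)) * ((t ^ (-(1/α))) ^ (-((d:ℝ)+α+m)) * ‖y‖ ^ (-((d:ℝ)+α+m))) := by
            rw [Real.mul_rpow (by norm_num : (0:ℝ) ≤ 2) (by positivity),
              Real.mul_rpow (by positivity : (0:ℝ) ≤ t ^ (-(1/α))) (norm_nonneg y)]
          have q3 : (t ^ (-(1/α))) ^ (-((d:ℝ)+α+m)) = t ^ (((d:ℝ)+α+m)/α) := by
            rw [← Real.rpow_mul ht.le, show -(1/α) * -((d:ℝ)+α+m) = ((d:ℝ)+α+m)/α by ring]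
          have q4 : t ^ (-((d:ℝ)/α)) * t ^ (((d:ℝ)+α+m)/α) = t ^ ((α+m)/α) := by
            rw [← Real.rpow_add ht, show -((d:ℝ)/α) + ((d:ℝ)+α+m)/α = (α+m)/α by ring]
          have e : (2:ℝ) ^ ((d:ℝ)+α+m) * 2 ^ (-((d:ℝ)+α+m)) = 1 := by
            rw [two_rpow_mul, show ((d:ℝ)+α+m) + -((d:ℝ)+α+m) = 0 by ring, Real.rpow_zero]
          have q5 : 2 ^ (-((d:ℝ)+α+m)) * (t ^ ((α+m)/α) * ‖y‖ ^ (-((d:ℝ)+α+m)))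
              ≤ rho d α m t y := by
            rw [rho_eq]
            calc 2 ^ (-((d:ℝ)+α+m)) * (t ^ ((α+m)/α) * ‖y‖ ^ (-((d:ℝ)+α+m)))
                = t ^ (-((d:ℝ)/α)) * ((2 * (t ^ (-(1/α)) * ‖y‖)) ^ (-((d:ℝ)+α+m))) := by
                  rw [q2, q3, ← q4]; ring
              _ ≤ t ^ (-((d:ℝ)/α)) * ((1 + t ^ (-(1/α)) * ‖y‖) ^ (-((d:ℝ)+α+m))) :=
                  mul_le_mul_of_nonneg_left q1 (Real.rpow_nonneg ht.le _)
          calc t ^ ((α+m)/α) * ‖y‖ ^ (-((d:ℝ)+α+m))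
              = 2 ^ ((d:ℝ)+α+m) *
                  (2 ^ (-((d:ℝ)+α+m)) * (t ^ ((α+m)/α) * ‖y‖ ^ (-((d:ℝ)+α+m)))) := by
                rw [← mul_assoc, e, one_mul]
            _ ≤ 2 ^ ((d:ℝ)+α+m) * rho d α m t y :=
                mul_le_mul_of_nonneg_left q5 (two_rpow_pos _).le
        have h4 : (2:ℝ) ^ ((d:ℝ)+α+k₂) * 2 ^ ((d:ℝ)+α+m) = Cb := by rw [two_rpow_mul, hCb]
        calc rho d α k₂ s z
            ≤ 2 ^ ((d:ℝ)+α+k₂) * (t ^ ((α+k₂)/α) * ‖y‖ ^ (-((d:ℝ)+α+k₂))) := A1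
          _ ≤ 2 ^ ((d:ℝ)+α+k₂) * (t ^ ((α+m)/α) * ‖y‖ ^ (-((d:ℝ)+α+m))) :=
              mul_le_mul_of_nonneg_left A2 (two_rpow_pos _).le
          _ ≤ 2 ^ ((d:ℝ)+α+k₂) * (2 ^ ((d:ℝ)+α+m) * rho d α m t y) :=
              mul_le_mul_of_nonneg_left A3 (two_rpow_pos _).le
          _ = Cb * rho d α m t y := by rw [← h4]; ring
  rcases hcases with h | h
  · calc rho d α k₁ (t-s) (y-z) * rho d α k₂ s z
        ≤ (Ca * rho d α m t y) * rho d α k₂ s z := mul_le_mul_of_nonneg_right h hr2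
      _ = rho d α m t y * (Ca * rho d α k₂ s z) := by ring
      _ ≤ rho d α m t y * (Ca * rho d α k₂ s z + Cb * rho d α k₁ (t-s) (y-z)) :=
          mul_le_mul_of_nonneg_left (le_add_of_nonneg_right (mul_nonneg hCb0.le hr1)) hrm
  · calc rho d α k₁ (t-s) (y-z) * rho d α k₂ s z
        ≤ rho d α k₁ (t-s) (y-z) * (Cb * rho d α m t y) := mul_le_mul_of_nonneg_left h hr1
      _ = rho d α m t y * (Cb * rho d α k₁ (t-s) (y-z)) := by ring
      _ ≤ rho d α m t y * (Ca * rho d α k₂ s z + Cb * rho d α k₁ (t-s) (y-z)) :=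
          mul_le_mul_of_nonneg_left (le_add_of_nonneg_left (mul_nonneg hCa0.le hr2)) hrm

noncomputable def J (d : ℕ) (α k : ℝ) : ℝ :=
  ∫ w : EuclideanSpace ℝ (Fin d), (1 + ‖w‖) ^ (-((d : ℝ) + α + k))

lemma J_nonneg (d : ℕ) (α k : ℝ) : 0 ≤ J d α k :=
  integral_nonneg fun w => Real.rpow_nonneg (by positivity) _

lemma g_integrable (d : ℕ) {α k : ℝ} (hα : 0 < α) (hk : -α < k) :
    Integrable (fun w : EuclideanSpace ℝ (Fin d) => (1 + ‖w‖) ^ (-((d : ℝ) + α + k))) := by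
  apply integrable_one_add_norm
  rw [finrank_euclideanSpace_fin]
  linarith

lemma rho_smul_eq {d : ℕ} {α k τ : ℝ} (hτ : 0 < τ) (z : EuclideanSpace ℝ (Fin d)) :
    rho d α k τ z
      = τ ^ (-((d : ℝ) / α)) * (1 + ‖(τ ^ (-(1 / α)) : ℝ) • z‖) ^ (-((d : ℝ) + α + k)) := by
  rw [rho_eq, norm_smul, Real.norm_eq_abs, abs_of_nonneg (Real.rpow_nonneg hτ.le _)]

lemma rho_integrable {d : ℕ} {α k τ : ℝ} (hα : 0 < α) (hk : -α < k) (hτ : 0 < τ) :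
    Integrable (fun z : EuclideanSpace ℝ (Fin d) => rho d α k τ z) := by
  have hc : (τ ^ (-(1 / α)) : ℝ) ≠ 0 := (Real.rpow_pos_of_pos hτ _).ne'
  have h := ((g_integrable d hα hk).comp_smul hc).const_mul (τ ^ (-((d : ℝ) / α)))
  exact h.congr (Filter.Eventually.of_forall fun z => ((rho_smul_eq hτ z)).symm)

lemma rho_integral {d : ℕ} {α k τ : ℝ} (hα : 0 < α) (hk : -α < k) (hτ : 0 < τ) :
    ∫ z : EuclideanSpace ℝ (Fin d), rho d α k τ z = J d α k := by
  have hc : (0:ℝ) ≤ τ ^ (-(1 / α)) := Real.rpow_nonneg hτ.le _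
  calc ∫ z : EuclideanSpace ℝ (Fin d), rho d α k τ z
      = ∫ z : EuclideanSpace ℝ (Fin d), τ ^ (-((d : ℝ) / α)) *
          (fun w : EuclideanSpace ℝ (Fin d) => (1 + ‖w‖) ^ (-((d : ℝ) + α + k)))
            ((τ ^ (-(1 / α)) : ℝ) • z) := by
        simp_rw [rho_smul_eq hτ]
    _ = τ ^ (-((d : ℝ) / α)) * ∫ z : EuclideanSpace ℝ (Fin d),
          (fun w : EuclideanSpace ℝ (Fin d) => (1 + ‖w‖) ^ (-((d : ℝ) + α + k)))
            ((τ ^ (-(1 / α)) : ℝ) • z) := integral_const_mul _ _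
    _ = τ ^ (-((d : ℝ) / α)) * (((τ ^ (-(1 / α)) : ℝ) ^ (Module.finrank ℝ (EuclideanSpace ℝ (Fin d))))⁻¹
          • J d α k) := by
        rw [MeasureTheory.Measure.integral_comp_smul_of_nonneg
          (volume : Measure (EuclideanSpace ℝ (Fin d)))
          (fun w : EuclideanSpace ℝ (Fin d) => (1 + ‖w‖) ^ (-((d : ℝ) + α + k)))
          (τ ^ (-(1 / α))) (hR := hc)]
        rfl
    _ = J d α k := by
        rw [finrank_euclideanSpace_fin, smul_eq_mul, ← mul_assoc]
        rw [← Real.rpow_natCast (τ ^ (-(1/α))) d, ← Real.rpow_mul hτ.le,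
          ← Real.rpow_neg hτ.le, ← Real.rpow_add hτ]
        rw [show -((d : ℝ)/α) + -(-(1/α) * (d:ℕ)) = 0 by push_cast; ring, Real.rpow_zero, one_mul]



set_option maxHeartbeats 1000000 in
lemma core (d : ℕ) (hd : 1 ≤ d) {α : ℝ} (hα1 : 1 < α) {k₁ k₂ : ℝ}
    (hk1 : -α < k₁) (hk2 : -α < k₂) :
    ∃ C : ℝ, 0 < C ∧ ∀ s t : ℝ, 0 < s → 2 * s ≤ t → ∀ y : EuclideanSpace ℝ (Fin d),
      ∫ z : EuclideanSpace ℝ (Fin d), rho d α k₁ (t - s) (y - z) * rho d α k₂ s z ≤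
        C * rho d α (min k₁ k₂) t y := by
  have hα0 : (0:ℝ) < α := by linarith
  refine ⟨2 ^ ((d:ℝ)/α + ((d:ℝ) + α + k₁) + ((d:ℝ) + α + min k₁ k₂)) * J d α k₂
    + 2 ^ (((d:ℝ) + α + k₂) + ((d:ℝ) + α + min k₁ k₂)) * J d α k₁ + 1, ?_, ?_⟩
  · have h1 : 0 ≤ 2 ^ ((d:ℝ)/α + ((d:ℝ) + α + k₁) + ((d:ℝ) + α + min k₁ k₂)) * J d α k₂ :=
      mul_nonneg (two_rpow_pos _).le (J_nonneg d α k₂)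
    have h2 : 0 ≤ 2 ^ (((d:ℝ) + α + k₂) + ((d:ℝ) + α + min k₁ k₂)) * J d α k₁ :=
      mul_nonneg (two_rpow_pos _).le (J_nonneg d α k₁)
    linarith
  · intro s t hs hst y
    have ht : 0 < t := by linarith
    have hts : 0 < t - s := by linarith
    have hmα : -α < min k₁ k₂ := lt_min hk1 hk2
    have hint2 : Integrable (fun z : EuclideanSpace ℝ (Fin d) => rho d α k₂ s z) :=
      rho_integrable hα0 hk2 hs
    have hint1 : Integrable (fun z : EuclideanSpace ℝ (Fin d) => rho d α k₁ (t-s) z) :=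
      rho_integrable hα0 hk1 hts
    have hint1' : Integrable (fun z : EuclideanSpace ℝ (Fin d) => rho d α k₁ (t-s) (y - z)) :=
      hint1.comp_sub_left y
    have hrm : 0 ≤ rho d α (min k₁ k₂) t y := rho_nonneg ht.le y
    calc ∫ z : EuclideanSpace ℝ (Fin d), rho d α k₁ (t - s) (y - z) * rho d α k₂ s z
        ≤ ∫ z : EuclideanSpace ℝ (Fin d), rho d α (min k₁ k₂) t y *
            (2 ^ ((d:ℝ)/α + ((d:ℝ) + α + k₁) + ((d:ℝ) + α + min k₁ k₂)) * rho d α k₂ s z +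
             2 ^ (((d:ℝ) + α + k₂) + ((d:ℝ) + α + min k₁ k₂)) * rho d α k₁ (t - s) (y - z)) := by
          apply integral_mono_of_nonneg
          · exact Filter.Eventually.of_forall fun z =>
              mul_nonneg (rho_nonneg hts.le _) (rho_nonneg hs.le _)
          · exact ((hint2.const_mul _).add (hint1'.const_mul _)).const_mul _
          · exact Filter.Eventually.of_forall fun z =>
              pointwise d hd hα1 hk1 hk2 hs hst y z
      _ = rho d α (min k₁ k₂) t y *
            (2 ^ ((d:ℝ)/α + ((d:ℝ) + α + k₁) + ((d:ℝ) + α + min k₁ k₂)) *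
              (∫ z : EuclideanSpace ℝ (Fin d), rho d α k₂ s z) +
             2 ^ (((d:ℝ) + α + k₂) + ((d:ℝ) + α + min k₁ k₂)) *
              (∫ z : EuclideanSpace ℝ (Fin d), rho d α k₁ (t - s) (y - z))) := by
          rw [integral_const_mul, integral_add (hint2.const_mul _) (hint1'.const_mul _),
            integral_const_mul, integral_const_mul]
      _ = rho d α (min k₁ k₂) t y *
            (2 ^ ((d:ℝ)/α + ((d:ℝ) + α + k₁) + ((d:ℝ) + α + min k₁ k₂)) * J d α k₂ +
             2 ^ (((d:ℝ) + α + k₂) + ((d:ℝ) + α + min k₁ k₂)) * J d α k₁) := by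
          rw [rho_integral hα0 hk2 hs,
            integral_sub_left_eq_self (fun z : EuclideanSpace ℝ (Fin d) => rho d α k₁ (t-s) z)
              volume y,
            rho_integral hα0 hk1 hts]
      _ ≤ (2 ^ ((d:ℝ)/α + ((d:ℝ) + α + k₁) + ((d:ℝ) + α + min k₁ k₂)) * J d α k₂
            + 2 ^ (((d:ℝ) + α + k₂) + ((d:ℝ) + α + min k₁ k₂)) * J d α k₁ + 1) *
            rho d α (min k₁ k₂) t y := by nlinarith

end RhoConv

/-- Convolution inequality:
`∫ ρ^{k₁}(t-s, y-z) ρ^{k₂}(s, z) dz ≤ C ρ^{min(k₁,k₂)}(t, y)`. -/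
theorem rho_convolution (d : ℕ) (hd : 1 ≤ d) (α : ℝ) (hα1 : 1 < α) (hα2 : α < 2)
    (k₁ k₂ : ℝ) (hk1 : -α < k₁) (hk2 : -α < k₂) :
    ∃ C : ℝ, 0 < C ∧ ∀ s t : ℝ, 0 ≤ s → s < t → ∀ y : EuclideanSpace ℝ (Fin d),
      ∫ z : EuclideanSpace ℝ (Fin d), rho d α k₁ (t - s) (y - z) * rho d α k₂ s z ≤
        C * rho d α (min k₁ k₂) t y := by
  obtain ⟨C₁, hC₁, H₁⟩ := RhoConv.core d hd hα1 hk1 hk2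
  obtain ⟨C₂, hC₂, H₂⟩ := RhoConv.core d hd hα1 hk2 hk1
  refine ⟨max C₁ C₂, lt_max_iff.mpr (Or.inl hC₁), ?_⟩
  intro s t hs hst y
  have ht : 0 < t := lt_of_le_of_lt hs hst
  rcases eq_or_lt_of_le hs with h0 | hs0
  · subst h0
    have hz : ∀ z : EuclideanSpace ℝ (Fin d), rho d α k₂ 0 z = 0 := by
      intro z
      rw [rho, Real.zero_rpow, zero_mul]
      apply div_ne_zero
      · have : (0:ℝ) < (d:ℝ) := by exact_mod_cast hd
        intro hcon
        simp only [neg_eq_zero] at hcon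
        linarith
      · linarith
    simp only [hz, mul_zero, integral_zero]
    exact mul_nonneg (le_of_lt (lt_max_iff.mpr (Or.inl hC₁))) (RhoConv.rho_nonneg ht.le y)
  · rcases le_or_gt (2*s) t with h | h
    · exact le_trans (H₁ s t hs0 h y)
        (mul_le_mul_of_nonneg_right (le_max_left _ _) (RhoConv.rho_nonneg ht.le y))
    · have h1 : 0 < t - s := by linarith
      have h2 : 2*(t-s) ≤ t := by linarith
      have H := H₂ (t-s) t h1 h2 y
      rw [show t - (t - s) = s by ring, min_comm k₂ k₁] at H
      have heq : (∫ z : EuclideanSpace ℝ (Fin d), rho d α k₁ (t-s) (y-z) * rho d α k₂ s z)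
          = ∫ z : EuclideanSpace ℝ (Fin d), rho d α k₂ s (y-z) * rho d α k₁ (t-s) z := by
        have hinv := integral_sub_left_eq_self
          (fun w : EuclideanSpace ℝ (Fin d) => rho d α k₂ s (y - w) * rho d α k₁ (t-s) w)
          volume y
        simp only [sub_sub_cancel] at hinv
        rw [← hinv]
        congr 1
        funext z
        ring
      rw [heq]
      exact le_trans H
        (mul_le_mul_of_nonneg_right (le_max_right _ _) (RhoConv.rho_nonneg ht.le y))
end

section
/- Under the iterated-kernel bound |H^k(s,t,x,y)| ≤ C^k (t-s)^{-1/α + (k-1)(1-1/α)} ∏_{j=1}^{k-1} B(j(1-1/α), 1-1/α) ρ^1(t-s, y-x) for all k ≥ 1, the series Φ(s,t,x,y) := ∑_{k=1}^∞ H^k(s,t,x,y) converges absolutely and there exists C' > 0 (depending only on C, α, d, T) such that |Φ(s,t,x,y)| ≤ C' (t-s)^{-1/α} ρ^1(t-s, y-x) for all 0 ≤ s < t ≤ T and x, y ∈ ℝ^d. -/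
open MeasureTheory Real Finset

/-- The Euler Beta function `B(x,y) = Γ(x)Γ(y)/Γ(x+y)`. -/
noncomputable def Beta (x y : ℝ) : ℝ := Real.Gamma x * Real.Gamma y / Real.Gamma (x + y)

/-- `ρ^1(t,x) = t^{-d/α} (1 + t^{-1/α}|x|)^{-d-α-1}`. -/
noncomputable def rho1 (d : ℕ) (α t : ℝ) (x : EuclideanSpace ℝ (Fin d)) : ℝ :=
  t ^ (-(d : ℝ) / α) * (1 + t ^ (-1 / α) * ‖x‖) ^ (-(d : ℝ) - α - 1)

lemma Beta_pos {x y : ℝ} (hx : 0 < x) (hy : 0 < y) : 0 < Beta x y :=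
  div_pos (mul_pos (Real.Gamma_pos_of_pos hx) (Real.Gamma_pos_of_pos hy))
    (Real.Gamma_pos_of_pos (add_pos hx hy))

/-- From log-convexity of `Γ`: `x Γ(x) ≤ Γ(x+a) (x+a)^{1-a}` for `0 < a < 1`. -/
lemma Gamma_ratio_lower (a x : ℝ) (ha : 0 < a) (ha1 : a < 1) (hx : 0 < x) :
    x * Real.Gamma x ≤ Real.Gamma (x + a) * (x + a) ^ (1 - a) := by
  have hxa : 0 < x + a := by linarith
  have hxa1 : (0:ℝ) < x + a + 1 := by linarith
  have h := Real.convexOn_log_Gamma.2 (Set.mem_Ioi.mpr hxa) (Set.mem_Ioi.mpr hxa1)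
    ha.le (by linarith : (0:ℝ) ≤ 1 - a) (by ring)
  simp only [smul_eq_mul, Function.comp_apply] at h
  rw [show a * (x + a) + (1 - a) * (x + a + 1) = x + 1 by ring] at h
  have hGxa : 0 < Real.Gamma (x + a) := Real.Gamma_pos_of_pos hxa
  rw [Real.Gamma_add_one hxa.ne', Real.log_mul hxa.ne' hGxa.ne'] at h
  have h' : Real.log (Real.Gamma (x + 1)) ≤
      Real.log (Real.Gamma (x + a)) + (1 - a) * Real.log (x + a) := by nlinarith
  have hG1 : 0 < Real.Gamma (x + 1) := Real.Gamma_pos_of_pos (by linarith)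
  have h2 := Real.exp_le_exp.mpr h'
  rw [Real.exp_log hG1, Real.exp_add, Real.exp_log hGxa] at h2
  rw [Real.Gamma_add_one hx.ne'] at h2
  calc x * Real.Gamma x ≤ Real.Gamma (x + a) * Real.exp ((1 - a) * Real.log (x + a)) := h2
    _ = Real.Gamma (x + a) * (x + a) ^ (1 - a) := by
        rw [Real.rpow_def_of_pos hxa, mul_comm (Real.log (x + a))]

/-- `B(x,a) ≤ 2 Γ(a) x^{-a}` for `x ≥ 1`, `0 < a < 1`. -/
lemma Beta_le_aux (a x : ℝ) (ha : 0 < a) (ha1 : a < 1) (hx : 1 ≤ x) :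
    Beta x a ≤ 2 * Real.Gamma a * x ^ (-a) := by
  have hx0 : 0 < x := lt_of_lt_of_le one_pos hx
  have hxa : 0 < x + a := by linarith
  have hGx := Real.Gamma_pos_of_pos hx0
  have hGa := Real.Gamma_pos_of_pos ha
  have hGxa := Real.Gamma_pos_of_pos hxa
  have h1 := Gamma_ratio_lower a x ha ha1 hx0
  have key : (x + a) ^ (1 - a) ≤ 2 * x ^ (1 - a) := by
    have e1 : (x + a) ^ (1 - a) ≤ (2 * x) ^ (1 - a) :=
      Real.rpow_le_rpow hxa.le (by linarith) (by linarith)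
    have e2 : (2 * x) ^ (1 - a) = 2 ^ (1 - a) * x ^ (1 - a) :=
      Real.mul_rpow (by norm_num) hx0.le
    have e3 : (2:ℝ) ^ (1 - a) ≤ 2 ^ (1:ℝ) :=
      Real.rpow_le_rpow_of_exponent_le (by norm_num) (by linarith)
    have e4 : ((2:ℝ):ℝ) ^ (1:ℝ) = 2 := Real.rpow_one 2
    have hp : 0 ≤ x ^ (1 - a) := (Real.rpow_pos_of_pos hx0 _).le
    calc (x + a) ^ (1 - a) ≤ 2 ^ (1 - a) * x ^ (1 - a) := by rw [← e2]; exact e1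
      _ ≤ 2 * x ^ (1 - a) := by nlinarith
  have h3 : x * Real.Gamma x ≤ Real.Gamma (x + a) * (2 * x ^ (1 - a)) :=
    h1.trans (mul_le_mul_of_nonneg_left key hGxa.le)
  have hxx : x ^ (1 - a) = x ^ (-a) * x := by
    have := Real.rpow_add hx0 (-a) 1
    rw [Real.rpow_one] at this
    rw [show (1 - a) = -a + 1 by ring, this]
  have h4 : Real.Gamma x ≤ 2 * x ^ (-a) * Real.Gamma (x + a) := by
    rw [hxx] at h3
    have h3' : x * Real.Gamma x ≤ x * (2 * x ^ (-a) * Real.Gamma (x + a)) := by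
      calc x * Real.Gamma x ≤ Real.Gamma (x + a) * (2 * (x ^ (-a) * x)) := h3
        _ = x * (2 * x ^ (-a) * Real.Gamma (x + a)) := by ring
    exact le_of_mul_le_mul_left h3' hx0
  rw [Beta, div_le_iff₀ hGxa]
  calc Real.Gamma x * Real.Gamma a ≤ (2 * x ^ (-a) * Real.Gamma (x + a)) * Real.Gamma a :=
        mul_le_mul_of_nonneg_right h4 hGa.le
    _ = 2 * Real.Gamma a * x ^ (-a) * Real.Gamma (x + a) := by ring

/-- The dominating sequence. -/
noncomputable def pb (C T a : ℝ) (k : ℕ) : ℝ :=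
  C ^ (k + 1) * T ^ ((k : ℝ) * a) * ∏ j ∈ Finset.Icc 1 k, Beta ((j : ℝ) * a) a

lemma pb_pos {C T a : ℝ} (hC : 0 < C) (hT : 0 < T) (ha : 0 < a) (k : ℕ) : 0 < pb C T a k := by
  refine mul_pos (mul_pos (pow_pos hC _) (Real.rpow_pos_of_pos hT _)) ?_
  refine Finset.prod_pos fun j hj => ?_
  have hj1 : 1 ≤ j := (Finset.mem_Icc.mp hj).1
  exact Beta_pos (mul_pos (by exact_mod_cast Nat.cast_pos.mpr hj1) ha) ha

lemma pb_succ {C T a : ℝ} (hT : 0 < T) (k : ℕ) :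
    pb C T a (k + 1) = pb C T a k * (C * T ^ a * Beta (((k : ℝ) + 1) * a) a) := by
  unfold pb
  rw [Finset.prod_Icc_succ_top (Nat.succ_le_succ (Nat.zero_le k)), pow_succ]
  push_cast
  rw [show ((k : ℝ) + 1) * a = (k : ℝ) * a + a by ring, Real.rpow_add hT]
  ring

lemma pb_summable {C T a : ℝ} (hC : 0 < C) (hT : 0 < T) (ha : 0 < a) (ha1 : a < 1) :
    Summable (pb C T a) := by
  have hGa := Real.Gamma_pos_of_pos ha
  have hM : 0 < C * T ^ a * (2 * Real.Gamma a) :=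
    mul_pos (mul_pos hC (Real.rpow_pos_of_pos hT a)) (by linarith)
  set M := C * T ^ a * (2 * Real.Gamma a) with hM_def
  have h1 : Filter.Tendsto (fun k : ℕ => ((k : ℝ) + 1) * a) Filter.atTop Filter.atTop :=
    Filter.Tendsto.atTop_mul_const ha
      (Filter.tendsto_atTop_add_const_right _ 1 tendsto_natCast_atTop_atTop)
  have hg : Filter.Tendsto (fun k : ℕ => (((k : ℝ) + 1) * a) ^ (-a)) Filter.atTop (nhds 0) :=
    (tendsto_rpow_neg_atTop ha).comp h1
  have hev1 : ∀ᶠ k : ℕ in Filter.atTop, (((k : ℝ) + 1) * a) ^ (-a) < 1 / (2 * M) :=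
    hg.eventually_lt_const (by positivity)
  have hev2 : ∀ᶠ k : ℕ in Filter.atTop, 1 ≤ ((k : ℝ) + 1) * a := h1.eventually_ge_atTop 1
  refine summable_of_ratio_norm_eventually_le (r := 1 / 2) (by norm_num) ?_
  filter_upwards [hev1, hev2] with k h1k h2k
  have hbk := pb_pos hC hT ha k
  have hq : C * T ^ a * Beta (((k : ℝ) + 1) * a) a ≤ 1 / 2 := by
    have hB := Beta_le_aux a (((k : ℝ) + 1) * a) ha ha1 h2k
    have hCT : 0 ≤ C * T ^ a := (mul_pos hC (Real.rpow_pos_of_pos hT a)).le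
    calc C * T ^ a * Beta (((k : ℝ) + 1) * a) a
        ≤ C * T ^ a * (2 * Real.Gamma a * (((k : ℝ) + 1) * a) ^ (-a)) :=
          mul_le_mul_of_nonneg_left hB hCT
      _ = M * (((k : ℝ) + 1) * a) ^ (-a) := by rw [hM_def]; ring
      _ ≤ M * (1 / (2 * M)) := mul_le_mul_of_nonneg_left h1k.le hM.le
      _ = 1 / 2 := by field_simp
  have hq0 : 0 < C * T ^ a * Beta (((k : ℝ) + 1) * a) a :=
    mul_pos (mul_pos hC (Real.rpow_pos_of_pos hT a))
      (Beta_pos (mul_pos (by positivity) ha) ha)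
  rw [pb_succ hT k, Real.norm_eq_abs, Real.norm_eq_abs, abs_of_pos hbk,
    abs_of_pos (mul_pos hbk hq0)]
  calc pb C T a k * (C * T ^ a * Beta (((k : ℝ) + 1) * a) a)
      ≤ pb C T a k * (1 / 2) := mul_le_mul_of_nonneg_left hq hbk.le
    _ = 1 / 2 * pb C T a k := by ring

/-- Under the iterated-kernel bounds, the parametrix series `Φ = ∑_{k≥1} H^k` converges
absolutely and satisfies `|Φ(s,t,x,y)| ≤ C' (t-s)^{-1/α} ρ^1(t-s, y-x)`. -/
theorem parametrix_series_convergence (d : ℕ) (hd : 1 ≤ d) (α T C : ℝ)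
    (hα1 : 1 < α) (hα2 : α < 2) (hT : 0 < T) (hC : 0 < C)
    (H : ℕ → ℝ → ℝ → EuclideanSpace ℝ (Fin d) → EuclideanSpace ℝ (Fin d) → ℝ)
    (hH : ∀ k : ℕ, 1 ≤ k → ∀ s t x y, 0 ≤ s → s < t → t ≤ T →
      |H k s t x y| ≤ C ^ k * (t - s) ^ (-1 / α + ((k : ℝ) - 1) * (1 - 1 / α)) *
        (∏ j ∈ Finset.Icc 1 (k - 1), Beta ((j : ℝ) * (1 - 1 / α)) (1 - 1 / α)) *
        rho1 d α (t - s) (y - x)) :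
    (∀ s t x y, 0 ≤ s → s < t → t ≤ T → Summable (fun k : ℕ => |H (k + 1) s t x y|)) ∧
    ∃ C' : ℝ, 0 < C' ∧ ∀ s t x y, 0 ≤ s → s < t → t ≤ T →
      |∑' k : ℕ, H (k + 1) s t x y| ≤ C' * (t - s) ^ (-1 / α) * rho1 d α (t - s) (y - x) := by
  have hα0 : 0 < α := by linarith
  set a : ℝ := 1 - 1 / α with ha_def
  have ha : 0 < a := by
    have : 1 / α < 1 := by rw [div_lt_one hα0]; exact hα1
    simp only [ha_def]; linarith
  have ha1 : a < 1 := by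
    have : 0 < 1 / α := by positivity
    simp only [ha_def]; linarith
  have hsum : Summable (pb C T a) := pb_summable hC hT ha ha1
  -- key termwise bound
  have hterm : ∀ s t x y, 0 ≤ s → s < t → t ≤ T → ∀ k : ℕ,
      |H (k + 1) s t x y| ≤ pb C T a k * ((t - s) ^ (-1 / α) * rho1 d α (t - s) (y - x)) := by
    intro s t x y hs hst htT k
    have hts : 0 < t - s := sub_pos.mpr hst
    have htsT : t - s ≤ T := by linarith
    have hρ : 0 ≤ rho1 d α (t - s) (y - x) := by
      unfold rho1
      exact mul_nonneg (Real.rpow_nonneg hts.le _)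
        (Real.rpow_nonneg (by positivity) _)
    have h := hH (k + 1) (by omega) s t x y hs hst htT
    simp only [Nat.add_sub_cancel] at h
    rw [show (-1 / α + (((k + 1 : ℕ) : ℝ) - 1) * a) = -1 / α + (k : ℝ) * a by
      push_cast; ring] at h
    have hP : 0 ≤ ∏ j ∈ Finset.Icc 1 k, Beta ((j : ℝ) * a) a := by
      refine Finset.prod_nonneg fun j hj => ?_
      have hj1 : 1 ≤ j := (Finset.mem_Icc.mp hj).1
      exact (Beta_pos (mul_pos (by exact_mod_cast Nat.cast_pos.mpr hj1) ha) ha).le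
    have hpow : (t - s) ^ (-1 / α + (k : ℝ) * a) ≤ (t - s) ^ (-1 / α) * T ^ ((k : ℝ) * a) := by
      rw [Real.rpow_add hts]
      exact mul_le_mul_of_nonneg_left
        (Real.rpow_le_rpow hts.le htsT (by positivity)) (Real.rpow_nonneg hts.le _)
    refine h.trans ?_
    have step : C ^ (k + 1) * (t - s) ^ (-1 / α + (k : ℝ) * a) *
          (∏ j ∈ Finset.Icc 1 k, Beta ((j : ℝ) * a) a) * rho1 d α (t - s) (y - x)
        ≤ C ^ (k + 1) * ((t - s) ^ (-1 / α) * T ^ ((k : ℝ) * a)) *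
          (∏ j ∈ Finset.Icc 1 k, Beta ((j : ℝ) * a) a) * rho1 d α (t - s) (y - x) := by
      refine mul_le_mul_of_nonneg_right (mul_le_mul_of_nonneg_right ?_ hP) hρ
      exact mul_le_mul_of_nonneg_left hpow (pow_pos hC (k + 1)).le
    refine step.trans (le_of_eq ?_)
    unfold pb; ring
  refine ⟨fun s t x y hs hst htT => ?_, ⟨∑' k, pb C T a k, ?_, ?_⟩⟩
  · exact Summable.of_nonneg_of_le (fun k => abs_nonneg _)
      (hterm s t x y hs hst htT) (hsum.mul_right _)
  · exact lt_of_lt_of_le (pb_pos hC hT ha 0)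
      (Summable.le_tsum hsum 0 fun j _ => (pb_pos hC hT ha j).le)
  · intro s t x y hs hst htT
    have habs : Summable (fun k : ℕ => |H (k + 1) s t x y|) :=
      Summable.of_nonneg_of_le (fun k => abs_nonneg _)
        (hterm s t x y hs hst htT) (hsum.mul_right _)
    calc |∑' k : ℕ, H (k + 1) s t x y| ≤ ∑' k : ℕ, |H (k + 1) s t x y| := by
          have := norm_tsum_le_tsum_norm (f := fun k : ℕ => H (k + 1) s t x y)
            (by simpa only [Real.norm_eq_abs] using habs)
          simpa only [Real.norm_eq_abs] using this
      _ ≤ ∑' k : ℕ, pb C T a k * ((t - s) ^ (-1 / α) * rho1 d α (t - s) (y - x)) :=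
          Summable.tsum_le_tsum (hterm s t x y hs hst htT) habs (hsum.mul_right _)
      _ = (∑' k, pb C T a k) * ((t - s) ^ (-1 / α) * rho1 d α (t - s) (y - x)) :=
          tsum_mul_right
      _ = (∑' k, pb C T a k) * (t - s) ^ (-1 / α) * rho1 d α (t - s) (y - x) :=
          (mul_assoc _ _ _).symm
end

section
/- Let u : 𝒫_β(ℝ^d) → ℝ admit a linear derivative δu/δm such that for each μ the map v ↦ (δu/δm)(μ)(v) is C¹ with ∂_v(δu/δm) jointly continuous on 𝒫_β(ℝ^d) × ℝ^d. Then for each N ≥ 1 the empirical projection u^N(x₁,…,x_N) := u((1/N)∑_{j=1}^N δ_{x_j}) is C¹ on (ℝ^d)^N, and ∂_{x_i} u^N(x₁,…,x_N) = (1/N) ∂_v (δu/δm)(μ̄^N_x)(x_i) for every i, where μ̄^N_x = (1/N)∑_j δ_{x_j}. -/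
open MeasureTheory Real ENNReal

/-- Membership in `𝒫_β(ℝ^d)`: probability measure with finite `β`-moment. -/
def Pmem (d : ℕ) (β : ℝ) (μ : Measure (EuclideanSpace ℝ (Fin d))) : Prop :=
  IsProbabilityMeasure μ ∧ Integrable (fun x => ‖x‖ ^ β) μ

/-- The `β`-Wasserstein distance, as the infimum of transport costs over couplings. -/
noncomputable def Wbeta (d : ℕ) (β : ℝ) (μ ν : Measure (EuclideanSpace ℝ (Fin d))) : ℝ :=
  sInf {r : ℝ | ∃ pi : Measure (EuclideanSpace ℝ (Fin d) × EuclideanSpace ℝ (Fin d)),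
    pi.map Prod.fst = μ ∧ pi.map Prod.snd = ν ∧
    r = (∫ p, ‖p.1 - p.2‖ ^ β ∂pi) ^ (1 / β)}

/-- The convex combination `t μ + (1-t) ν` of two measures. -/
noncomputable def mix {X : Type*} [MeasurableSpace X] (t : ℝ) (μ ν : Measure X) : Measure X :=
  ENNReal.ofReal t • μ + ENNReal.ofReal (1 - t) • ν

/-- The empirical measure `μ̄^N_x = (1/N) ∑ δ_{x_k}`. -/
noncomputable def emp {d N : ℕ} (x : Fin N → EuclideanSpace ℝ (Fin d)) :
    Measure (EuclideanSpace ℝ (Fin d)) :=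
  (N : ℝ≥0∞)⁻¹ • ∑ k : Fin N, Measure.dirac (x k)

/-!
By the linear-derivative identity, `u(μ̄^N_y) - u(μ̄^N_x)` is the time average over `t ∈ [0, 1]`
of `(1/N) ∑ₖ (D_t(y_k) - D_t(x_k))`, where `D_t = δu/δm(t μ̄^N_y + (1 - t) μ̄^N_x)`. Coupling
`x_k` with `y_k` shows that every such mixture lies within `W_β`-distance `‖y - x‖` of `μ̄^N_x`,
so joint continuity of `∂_v δu/δm` and the mean value inequality make each summand
`∂_v δu/δm(μ̄^N_x)(x_k)(y_k - x_k) + o(‖y - x‖)`, uniformly in `t`. The same couplings make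
`x ↦ μ̄^N_x` and `t ↦ D_t` continuous for `W_β`, which gives continuity of the derivative and
integrability in `t`.
-/

open Filter Topology

section EmpiricalMeasure

variable {X : Type*} [MeasurableSpace X] {N : ℕ}

/-- `emp` on an arbitrary measurable space, needed on `ℝ^d × ℝ^d` for couplings. -/
noncomputable def empiricalMeasure (p : Fin N → X) : Measure X :=
  (N : ℝ≥0∞)⁻¹ • ∑ k : Fin N, Measure.dirac (p k)

lemma map_empiricalMeasure {Y : Type*} [MeasurableSpace Y] (p : Fin N → X) {g : X → Y}
    (hg : Measurable g) : (empiricalMeasure p).map g = empiricalMeasure (g ∘ p) := by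
  simp only [empiricalMeasure, Measure.map_smul,
    Measure.map_finset_sum' hg.aemeasurable, Measure.map_dirac' hg, Function.comp_apply]

lemma isProbabilityMeasure_empiricalMeasure (hN : N ≠ 0) (p : Fin N → X) :
    IsProbabilityMeasure (empiricalMeasure p) := by
  constructor
  simp [empiricalMeasure, Measure.finsetSum_apply, ENNReal.inv_mul_cancel, hN]

variable [MeasurableSingletonClass X]

lemma integrable_empiricalMeasure (hN : N ≠ 0) (p : Fin N → X) (f : X → ℝ) :
    Integrable f (empiricalMeasure p) :=
  (integrable_finsetSum_measure.2 fun k _ => integrable_dirac enorm_lt_top).smul_measure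
    (by simp [hN])

lemma integral_empiricalMeasure (p : Fin N → X) (f : X → ℝ) :
    ∫ v, f v ∂(empiricalMeasure p) = (N : ℝ)⁻¹ * ∑ k, f (p k) := by
  rw [empiricalMeasure, integral_smul_measure,
    integral_finsetSum_measure fun k _ => integrable_dirac enorm_lt_top]
  simp [integral_dirac]

end EmpiricalMeasure

lemma integral_emp {d N : ℕ} (x : Fin N → EuclideanSpace ℝ (Fin d))
    (f : EuclideanSpace ℝ (Fin d) → ℝ) : ∫ v, f v ∂(emp x) = (N : ℝ)⁻¹ * ∑ k, f (x k) :=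
  integral_empiricalMeasure x f

lemma pmem_emp {d N : ℕ} (hN : N ≠ 0) (β : ℝ) (x : Fin N → EuclideanSpace ℝ (Fin d)) :
    Pmem d β (emp x) :=
  ⟨isProbabilityMeasure_empiricalMeasure hN x, integrable_empiricalMeasure hN x _⟩

lemma pmem_mix {d : ℕ} {β t : ℝ} {μ ν : Measure (EuclideanSpace ℝ (Fin d))}
    (hμ : Pmem d β μ) (hν : Pmem d β ν) (ht₀ : 0 ≤ t) (ht₁ : t ≤ 1) :
    Pmem d β (mix t μ ν) := by
  have := hμ.1
  have := hν.1
  refine ⟨⟨?_⟩, (hμ.2.smul_measure ofReal_ne_top).add_measure (hν.2.smul_measure ofReal_ne_top)⟩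
  simp [mix, ← ENNReal.ofReal_add ht₀ (sub_nonneg.2 ht₁)]

section Wasserstein

variable {d N : ℕ} {β : ℝ}

lemma Wbeta_nonneg (μ ν : Measure (EuclideanSpace ℝ (Fin d))) : 0 ≤ Wbeta d β μ ν :=
  Real.sInf_nonneg <| by rintro _ ⟨γ, -, -, rfl⟩; positivity

lemma Wbeta_le_of_coupling {μ ν : Measure (EuclideanSpace ℝ (Fin d))}
    (γ : Measure (EuclideanSpace ℝ (Fin d) × EuclideanSpace ℝ (Fin d)))
    (hγ₁ : γ.map Prod.fst = μ) (hγ₂ : γ.map Prod.snd = ν) :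
    Wbeta d β μ ν ≤ (∫ p, ‖p.1 - p.2‖ ^ β ∂γ) ^ (1 / β) :=
  csInf_le ⟨0, by rintro _ ⟨γ, -, -, rfl⟩; positivity⟩ ⟨γ, hγ₁, hγ₂, rfl⟩

/-- The coupling transports mass `c` of `emp a` along `a k ↦ b k` and leaves the rest in place. -/
lemma Wbeta_add_smul_emp_le (hN : N ≠ 0) (hβ : 0 < β) (a b : Fin N → EuclideanSpace ℝ (Fin d))
    {s r c : ℝ} (hs : 0 ≤ s) (hr : 0 ≤ r) (hc : 0 ≤ c) :
    Wbeta d β (ENNReal.ofReal (s + c) • emp a + ENNReal.ofReal r • emp b)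
      (ENNReal.ofReal s • emp a + ENNReal.ofReal (r + c) • emp b) ≤ c ^ (1 / β) * ‖a - b‖ := by
  let P (a b : Fin N → EuclideanSpace ℝ (Fin d)) := empiricalMeasure fun k => (a k, b k)
  have hP₁ a b : (P a b).map Prod.fst = emp a := map_empiricalMeasure _ measurable_fst
  have hP₂ a b : (P a b).map Prod.snd = emp b := map_empiricalMeasure _ measurable_snd
  set f : EuclideanSpace ℝ (Fin d) × EuclideanSpace ℝ (Fin d) → ℝ := fun p => ‖p.1 - p.2‖ ^ β
  have hf a b (w : ℝ) : Integrable f (ENNReal.ofReal w • P a b) :=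
    (integrable_empiricalMeasure hN _ f).smul_measure ofReal_ne_top
  have hcost a b : ∫ p, f p ∂(P a b) = (N : ℝ)⁻¹ * ∑ k, ‖a k - b k‖ ^ β :=
    integral_empiricalMeasure _ f
  have hdiag a : ∫ p, f p ∂(P a a) = 0 := by simp [hcost, Real.zero_rpow hβ.ne']
  have hcost_le : ∫ p, f p ∂(P a b) ≤ ‖a - b‖ ^ β := by
    rw [hcost, inv_mul_le_iff₀ (by positivity)]
    calc ∑ k, ‖a k - b k‖ ^ β ≤ ∑ _k : Fin N, ‖a - b‖ ^ β := by
          gcongr with k; exact norm_le_pi_norm (a - b) k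
      _ = N * ‖a - b‖ ^ β := by simp
  let γ := ENNReal.ofReal s • P a a + ENNReal.ofReal r • P b b + ENNReal.ofReal c • P a b
  calc _ ≤ (∫ p, f p ∂γ) ^ (1 / β) := by
        refine Wbeta_le_of_coupling γ ?_ ?_
        · simp only [γ, Measure.map_add _ _ measurable_fst, Measure.map_smul, hP₁]
          rw [add_right_comm, ← add_smul, ← ENNReal.ofReal_add hs hc]
        · simp only [γ, Measure.map_add _ _ measurable_snd, Measure.map_smul, hP₂]
          rw [add_assoc, ← add_smul, ← ENNReal.ofReal_add hr hc]
    _ ≤ (c * ‖a - b‖ ^ β) ^ (1 / β) := by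
        gcongr
        rw [integral_add_measure ((hf a a s).add_measure (hf b b r)) (hf a b c),
          integral_add_measure (hf a a s) (hf b b r)]
        simp only [integral_smul_measure, hdiag, smul_eq_mul, mul_zero, zero_add,
          ENNReal.toReal_ofReal hc]
        exact mul_le_mul_of_nonneg_left hcost_le hc
    _ = c ^ (1 / β) * ‖a - b‖ := by
        rw [Real.mul_rpow hc (by positivity), ← Real.rpow_mul (norm_nonneg _),
          mul_one_div_cancel hβ.ne', Real.rpow_one]

lemma Wbeta_emp_le (hN : N ≠ 0) (hβ : 0 < β) (a b : Fin N → EuclideanSpace ℝ (Fin d)) :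
    Wbeta d β (emp a) (emp b) ≤ ‖a - b‖ := by
  simpa using Wbeta_add_smul_emp_le hN hβ a b le_rfl le_rfl zero_le_one

lemma Wbeta_emp_mix_le (hN : N ≠ 0) (hβ : 0 < β) (x y : Fin N → EuclideanSpace ℝ (Fin d))
    {t : ℝ} (ht₀ : 0 ≤ t) (ht₁ : t ≤ 1) :
    Wbeta d β (emp x) (mix t (emp y) (emp x)) ≤ ‖x - y‖ := by
  have h := Wbeta_add_smul_emp_le hN hβ x y (sub_nonneg.2 ht₁) le_rfl ht₀
  rw [sub_add_cancel, ENNReal.ofReal_one, one_smul, ENNReal.ofReal_zero, zero_smul, add_zero,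
    zero_add, ← add_comm, ← mix] at h
  exact h.trans (mul_le_of_le_one_left (norm_nonneg _)
    (Real.rpow_le_one ht₀ ht₁ (by positivity)))

lemma Wbeta_mix_le (hN : N ≠ 0) (hβ : 0 < β) (x y : Fin N → EuclideanSpace ℝ (Fin d))
    {t t' : ℝ} (ht : t ∈ Set.Icc (0 : ℝ) 1) (ht' : t' ∈ Set.Icc (0 : ℝ) 1) :
    Wbeta d β (mix t (emp y) (emp x)) (mix t' (emp y) (emp x)) ≤
      |t' - t| ^ (1 / β) * ‖x - y‖ := by
  rcases le_total t' t with h | h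
  · have hW := Wbeta_add_smul_emp_le hN hβ y x ht'.1 (sub_nonneg.2 ht.2) (sub_nonneg.2 h)
    rw [add_sub_cancel, sub_add_sub_cancel, norm_sub_rev] at hW
    rw [abs_sub_comm, abs_of_nonneg (sub_nonneg.2 h)]
    exact hW
  · have hW := Wbeta_add_smul_emp_le hN hβ x y (sub_nonneg.2 ht'.2) ht.1 (sub_nonneg.2 h)
    rw [sub_add_sub_cancel, add_sub_cancel, add_comm (_ • emp x), add_comm (_ • emp x)] at hW
    rw [abs_of_nonneg (sub_nonneg.2 h)]
    exact hW

end Wasserstein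

section Continuity

variable {d N : ℕ} {β : ℝ}

lemma tendsto_Wbeta_emp (hN : N ≠ 0) (hβ : 0 < β) (x₀ : Fin N → EuclideanSpace ℝ (Fin d)) :
    Tendsto (fun x => Wbeta d β (emp x₀) (emp x)) (𝓝 x₀) (𝓝 0) :=
  squeeze_zero (fun _ => Wbeta_nonneg _ _) (fun x => (Wbeta_emp_le hN hβ x₀ x).trans_eq
    (norm_sub_rev _ _)) (tendsto_iff_norm_sub_tendsto_zero.1 tendsto_id)

lemma tendsto_Wbeta_mix (hN : N ≠ 0) (hβ : 0 < β) (x y : Fin N → EuclideanSpace ℝ (Fin d))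
    {t₀ : ℝ} (ht₀ : t₀ ∈ Set.Icc (0 : ℝ) 1) :
    Tendsto (fun t => Wbeta d β (mix t₀ (emp y) (emp x)) (mix t (emp y) (emp x)))
      (𝓝[Set.Icc 0 1] t₀) (𝓝 0) := by
  have hbound : Tendsto (fun t => |t - t₀| ^ (1 / β) * ‖x - y‖) (𝓝 t₀) (𝓝 0) := by
    have hcont : Continuous fun t => |t - t₀| ^ (1 / β) * ‖x - y‖ := by
      fun_prop (disch := positivity)
    have h := hcont.tendsto t₀
    rwa [sub_self, abs_zero, Real.zero_rpow (one_div_pos.2 hβ).ne', zero_mul] at h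
  exact squeeze_zero' (Eventually.of_forall fun _ => Wbeta_nonneg _ _)
    (eventually_nhdsWithin_of_forall fun t ht => Wbeta_mix_le hN hβ x y ht₀ ht)
    (hbound.mono_left nhdsWithin_le_nhds)

/-- Joint continuity of `G` at `(μ, v)` on `𝒫_β(ℝ^d) × ℝ^d`, for the `W_β` distance. -/
def WContinuousAt {F : Type*} [SeminormedAddCommGroup F] (d : ℕ) (β : ℝ)
    (G : Measure (EuclideanSpace ℝ (Fin d)) → EuclideanSpace ℝ (Fin d) → F)
    (μ : Measure (EuclideanSpace ℝ (Fin d))) (v : EuclideanSpace ℝ (Fin d)) : Prop :=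
  ∀ ε : ℝ, 0 < ε → ∃ δ : ℝ, 0 < δ ∧ ∀ ν, Pmem d β ν → ∀ v' : EuclideanSpace ℝ (Fin d),
    Wbeta d β μ ν < δ → ‖v' - v‖ < δ → ‖G ν v' - G μ v‖ < ε

lemma WContinuousAt.continuousWithinAt_comp {F T : Type*} [SeminormedAddCommGroup F]
    [TopologicalSpace T] {G : Measure (EuclideanSpace ℝ (Fin d)) → EuclideanSpace ℝ (Fin d) → F}
    {m : T → Measure (EuclideanSpace ℝ (Fin d))} {v : T → EuclideanSpace ℝ (Fin d)}
    {s : Set T} {t₀ : T} (hG : WContinuousAt d β G (m t₀) (v t₀)) (hm : ∀ t ∈ s, Pmem d β (m t))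
    (hW : Tendsto (fun t => Wbeta d β (m t₀) (m t)) (𝓝[s] t₀) (𝓝 0))
    (hv : ContinuousWithinAt v s t₀) :
    ContinuousWithinAt (fun t => G (m t) (v t)) s t₀ := by
  refine Metric.tendsto_nhds.2 fun ε hε => ?_
  obtain ⟨δ, hδ, hGδ⟩ := hG ε hε
  filter_upwards [self_mem_nhdsWithin, hW.eventually (gt_mem_nhds hδ),
    Metric.tendsto_nhds.1 hv δ hδ] with t ht hWt hvt
  rw [dist_eq_norm] at hvt ⊢
  exact hGδ _ (hm t ht) _ hWt hvt

end Continuity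

section Calculus

variable {E : Type*} [NormedAddCommGroup E] [NormedSpace ℝ E]

lemma sum_smul_comp_proj_apply {N : ℕ} (c : ℝ) (A : Fin N → E →L[ℝ] ℝ) (w : Fin N → E) :
    (∑ i, (c • A i).comp (ContinuousLinearMap.proj (R := ℝ) (φ := fun _ : Fin N => E) i)) w =
      c * ∑ i, A i (w i) := by
  simp [Finset.mul_sum]

lemma norm_intervalIntegral_sub_le [CompleteSpace E] {F : ℝ → E} {c : E} {K : ℝ}
    (hF : IntervalIntegrable F volume 0 1) (hK : ∀ t ∈ Set.Icc (0 : ℝ) 1, ‖F t - c‖ ≤ K) :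
    ‖(∫ t in (0 : ℝ)..1, F t) - c‖ ≤ K := by
  have h := intervalIntegral.norm_integral_le_of_norm_le_const (a := 0) (b := 1) fun t ht =>
    hK t (Set.Ioc_subset_Icc_self (Set.uIoc_of_le (zero_le_one' ℝ) ▸ ht))
  rw [intervalIntegral.integral_sub hF intervalIntegrable_const,
    intervalIntegral.integral_const] at h
  simpa using h

lemma norm_avg_sub_sub_le_of_fderiv {N : ℕ} (hN : N ≠ 0) {f : E → ℝ} (hf : Differentiable ℝ f)
    {A : Fin N → E →L[ℝ] ℝ} {x y : Fin N → E} {ε : ℝ}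
    (hA : ∀ k, ∀ z ∈ Metric.closedBall (x k) ‖y - x‖, ‖fderiv ℝ f z - A k‖ ≤ ε) :
    ‖(N : ℝ)⁻¹ * ∑ k, (f (y k) - f (x k)) - (N : ℝ)⁻¹ * ∑ k, A k (y k - x k)‖ ≤
      ε * ‖y - x‖ := by
  have hk k : ‖f (y k) - f (x k) - A k (y k - x k)‖ ≤ ε * ‖y - x‖ := by
    have hxk := Metric.mem_closedBall_self (x := x k) (norm_nonneg (y - x))
    have hyk : ‖y k - x k‖ ≤ ‖y - x‖ := norm_le_pi_norm (y - x) k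
    calc _ ≤ ε * ‖y k - x k‖ :=
          (convex_closedBall _ _).norm_image_sub_le_of_norm_fderiv_le' (fun z _ => hf z) (hA k)
            hxk (mem_closedBall_iff_norm.2 hyk)
      _ ≤ ε * ‖y - x‖ := by
          gcongr
          exact (norm_nonneg _).trans (hA k _ hxk)
  rw [← mul_sub, ← Finset.sum_sub_distrib, norm_mul, norm_inv, Real.norm_natCast,
    inv_mul_le_iff₀ (by positivity)]
  calc _ ≤ ∑ k, ‖f (y k) - f (x k) - A k (y k - x k)‖ := norm_sum_le _ _
    _ ≤ ∑ _k : Fin N, ε * ‖y - x‖ := Finset.sum_le_sum fun k _ => hk k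
    _ = N * (ε * ‖y - x‖) := by simp

end Calculus

section EmpiricalProjection

variable {d N : ℕ} {β : ℝ} {u : Measure (EuclideanSpace ℝ (Fin d)) → ℝ}
  {D : Measure (EuclideanSpace ℝ (Fin d)) → EuclideanSpace ℝ (Fin d) → ℝ}

lemma sub_eq_integral_avg_of_linearDerivative
    (hLin : ∀ μ ν, Pmem d β μ → Pmem d β ν →
      u μ - u ν = ∫ t in (0:ℝ)..1,
        ((∫ v, D (mix t μ ν) v ∂μ) - ∫ v, D (mix t μ ν) v ∂ν))
    (hN : N ≠ 0) (x y : Fin N → EuclideanSpace ℝ (Fin d)) :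
    u (emp y) - u (emp x) = ∫ t in (0:ℝ)..1,
      (N : ℝ)⁻¹ * ∑ k, (D (mix t (emp y) (emp x)) (y k) - D (mix t (emp y) (emp x)) (x k)) := by
  simp only [hLin _ _ (pmem_emp hN β y) (pmem_emp hN β x), integral_emp, Finset.sum_sub_distrib,
    mul_sub]

lemma continuousOn_apply_mix_emp (hN : N ≠ 0) (hβ : 0 < β)
    (hDcont : ∀ μ, Pmem d β μ → ∀ v, WContinuousAt d β D μ v)
    (x y : Fin N → EuclideanSpace ℝ (Fin d)) (v : EuclideanSpace ℝ (Fin d)) :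
    ContinuousOn (fun t => D (mix t (emp y) (emp x)) v) (Set.Icc 0 1) := by
  have hμ t (ht : t ∈ Set.Icc (0 : ℝ) 1) : Pmem d β (mix t (emp y) (emp x)) :=
    pmem_mix (pmem_emp hN β y) (pmem_emp hN β x) ht.1 ht.2
  exact fun t ht => (hDcont _ (hμ t ht) v).continuousWithinAt_comp
    (m := fun t => mix t (emp y) (emp x)) (v := fun _ => v) hμ (tendsto_Wbeta_mix hN hβ x y ht)
    continuousWithinAt_const

lemma continuous_fderiv_apply_emp (hN : N ≠ 0) (hβ : 0 < β)
    (hDVcont : ∀ μ, Pmem d β μ → ∀ v, WContinuousAt d β (fun μ => fderiv ℝ (D μ)) μ v)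
    (i : Fin N) :
    Continuous fun x : Fin N → EuclideanSpace ℝ (Fin d) => fderiv ℝ (D (emp x)) (x i) :=
  continuous_iff_continuousAt.2 fun x₀ => continuousWithinAt_univ _ _ |>.1 <|
    (hDVcont _ (pmem_emp hN β x₀) (x₀ i)).continuousWithinAt_comp (m := emp) (v := fun x => x i)
      (fun x _ => pmem_emp hN β x)
      (by simpa only [nhdsWithin_univ] using tendsto_Wbeta_emp hN hβ x₀)
      (continuous_apply i).continuousWithinAt

theorem hasFDerivAt_comp_emp (hN : N ≠ 0) (hβ : 0 < β)
    (hDcont : ∀ μ, Pmem d β μ → ∀ v, WContinuousAt d β D μ v)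
    (hLin : ∀ μ ν, Pmem d β μ → Pmem d β ν →
      u μ - u ν = ∫ t in (0:ℝ)..1,
        ((∫ v, D (mix t μ ν) v ∂μ) - ∫ v, D (mix t μ ν) v ∂ν))
    (hDdiff : ∀ μ, Pmem d β μ → Differentiable ℝ (D μ))
    (hDVcont : ∀ μ, Pmem d β μ → ∀ v, WContinuousAt d β (fun μ => fderiv ℝ (D μ)) μ v)
    (x : Fin N → EuclideanSpace ℝ (Fin d)) :
    HasFDerivAt (fun y => u (emp y))
      (∑ i, ((N : ℝ)⁻¹ • fderiv ℝ (D (emp x)) (x i)).comp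
        (ContinuousLinearMap.proj (R := ℝ) (φ := fun _ : Fin N => EuclideanSpace ℝ (Fin d)) i))
      x := by
  rw [hasFDerivAt_iff_isLittleO, Asymptotics.isLittleO_iff]
  intro ε hε
  choose δ hδ hclose using fun k => hDVcont (emp x) (pmem_emp hN β x) (x k) ε hε
  have hnear : ∀ᶠ y in 𝓝 x, ∀ k, ‖y - x‖ < δ k := eventually_all.2 fun k => by
    filter_upwards [Metric.ball_mem_nhds x (hδ k)] with y hy using mem_ball_iff_norm.1 hy
  filter_upwards [hnear] with y hy
  have hμ t (ht : t ∈ Set.Icc (0 : ℝ) 1) : Pmem d β (mix t (emp y) (emp x)) :=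
    pmem_mix (pmem_emp hN β y) (pmem_emp hN β x) ht.1 ht.2
  rw [sub_eq_integral_avg_of_linearDerivative hLin hN, sum_smul_comp_proj_apply]
  refine norm_intervalIntegral_sub_le ?_ fun t ht => ?_
  · refine ContinuousOn.intervalIntegrable ?_
    rw [Set.uIcc_of_le zero_le_one]
    exact continuousOn_const.mul (continuousOn_finsetSum _ fun k _ =>
      (continuousOn_apply_mix_emp hN hβ hDcont x y (y k)).sub
        (continuousOn_apply_mix_emp hN hβ hDcont x y (x k)))
  · refine norm_avg_sub_sub_le_of_fderiv hN (hDdiff _ (hμ t ht)) fun k z hz =>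
      (hclose k _ (hμ t ht) z ?_ ((mem_closedBall_iff_norm.1 hz).trans_lt (hy k))).le
    exact (Wbeta_emp_mix_le hN hβ x y ht.1 ht.2).trans_lt (norm_sub_rev x y ▸ hy k)

end EmpiricalProjection

theorem empirical_projection_C1_general (d N : ℕ) (hN : 1 ≤ N)
    (β : ℝ) (hβ1 : 1 ≤ β)
    (u : Measure (EuclideanSpace ℝ (Fin d)) → ℝ)
    (D : Measure (EuclideanSpace ℝ (Fin d)) → EuclideanSpace ℝ (Fin d) → ℝ)
    (hDcont : ∀ μ, Pmem d β μ → ∀ v : EuclideanSpace ℝ (Fin d), ∀ ε : ℝ, 0 < ε →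
      ∃ δ : ℝ, 0 < δ ∧ ∀ ν, Pmem d β ν → ∀ v' : EuclideanSpace ℝ (Fin d),
        Wbeta d β μ ν < δ → ‖v' - v‖ < δ → |D ν v' - D μ v| < ε)
    (hLin : ∀ μ ν, Pmem d β μ → Pmem d β ν →
      u μ - u ν = ∫ t in (0:ℝ)..1,
        ((∫ v, D (mix t μ ν) v ∂μ) - ∫ v, D (mix t μ ν) v ∂ν))
    (hDdiff : ∀ μ, Pmem d β μ → Differentiable ℝ (D μ))
    (hDVcont : ∀ μ, Pmem d β μ → ∀ v : EuclideanSpace ℝ (Fin d), ∀ ε : ℝ, 0 < ε →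
      ∃ δ : ℝ, 0 < δ ∧ ∀ ν, Pmem d β ν → ∀ v' : EuclideanSpace ℝ (Fin d),
        Wbeta d β μ ν < δ → ‖v' - v‖ < δ →
          ‖fderiv ℝ (D ν) v' - fderiv ℝ (D μ) v‖ < ε) :
    ContDiff ℝ 1 (fun x : Fin N → EuclideanSpace ℝ (Fin d) => u (emp x)) ∧
    ∀ x : Fin N → EuclideanSpace ℝ (Fin d),
      HasFDerivAt (fun y : Fin N → EuclideanSpace ℝ (Fin d) => u (emp y))
        (∑ i : Fin N, ((N : ℝ)⁻¹ • fderiv ℝ (D (emp x)) (x i)).comp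
          (ContinuousLinearMap.proj (R := ℝ) (φ := fun _ : Fin N => EuclideanSpace ℝ (Fin d)) i))
        x := by
  have hN₀ : N ≠ 0 := Nat.one_le_iff_ne_zero.1 hN
  have hβ : 0 < β := zero_lt_one.trans_le hβ1
  have hDcont' : ∀ μ, Pmem d β μ → ∀ v, WContinuousAt d β D μ v := fun μ hμ v => by
    simpa only [WContinuousAt, Real.norm_eq_abs] using hDcont μ hμ v
  have hderiv := hasFDerivAt_comp_emp hN₀ hβ hDcont' hLin hDdiff hDVcont
  refine ⟨contDiff_one_iff_hasFDerivAt.2 ⟨_, ?_, hderiv⟩, hderiv⟩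
  have hcont := continuous_fderiv_apply_emp hN₀ hβ hDVcont
  fun_prop

/-- If `u` has a linear derivative `D` whose `v`-gradient is jointly continuous, then the
empirical projection `x ↦ u(μ̄^N_x)` is `C¹` and
`∂_{x_i} u^N(x) = (1/N) ∂_v D(μ̄^N_x)(x_i)`. -/
theorem empirical_projection_C1 (d N : ℕ) (hd : 1 ≤ d) (hN : 1 ≤ N)
    (β : ℝ) (hβ1 : 1 ≤ β) (hβ2 : β ≤ 2)
    (u : Measure (EuclideanSpace ℝ (Fin d)) → ℝ)
    (D : Measure (EuclideanSpace ℝ (Fin d)) → EuclideanSpace ℝ (Fin d) → ℝ)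
    (hDcont : ∀ μ, Pmem d β μ → ∀ v : EuclideanSpace ℝ (Fin d), ∀ ε : ℝ, 0 < ε →
      ∃ δ : ℝ, 0 < δ ∧ ∀ ν, Pmem d β ν → ∀ v' : EuclideanSpace ℝ (Fin d),
        Wbeta d β μ ν < δ → ‖v' - v‖ < δ → |D ν v' - D μ v| < ε)
    (hgrowth : ∀ μ, Pmem d β μ → ∃ Cμ : ℝ, ∀ v, |D μ v| ≤ Cμ * (1 + ‖v‖ ^ β))
    (hLin : ∀ μ ν, Pmem d β μ → Pmem d β ν →
      u μ - u ν = ∫ t in (0:ℝ)..1,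
        ((∫ v, D (mix t μ ν) v ∂μ) - ∫ v, D (mix t μ ν) v ∂ν))
    (hDdiff : ∀ μ, Pmem d β μ → Differentiable ℝ (D μ))
    (hDVcont : ∀ μ, Pmem d β μ → ∀ v : EuclideanSpace ℝ (Fin d), ∀ ε : ℝ, 0 < ε →
      ∃ δ : ℝ, 0 < δ ∧ ∀ ν, Pmem d β ν → ∀ v' : EuclideanSpace ℝ (Fin d),
        Wbeta d β μ ν < δ → ‖v' - v‖ < δ →
          ‖fderiv ℝ (D ν) v' - fderiv ℝ (D μ) v‖ < ε) :
    ContDiff ℝ 1 (fun x : Fin N → EuclideanSpace ℝ (Fin d) => u (emp x)) ∧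
    ∀ x : Fin N → EuclideanSpace ℝ (Fin d),
      HasFDerivAt (fun y : Fin N → EuclideanSpace ℝ (Fin d) => u (emp y))
        (∑ i : Fin N, ((N : ℝ)⁻¹ • fderiv ℝ (D (emp x)) (x i)).comp
          (ContinuousLinearMap.proj (R := ℝ) (φ := fun _ : Fin N => EuclideanSpace ℝ (Fin d)) i))
        x :=
  empirical_projection_C1_general d N hN β hβ1 u D hDcont hLin hDdiff hDVcont
end
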